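/- Assume additionally that the integral of −3v0/μ² over [t*, ∞) is finite. Let (a+, φ) be a solution of the reduced Stenzel monopole system with a+(t*) > 0, φ(t*) > 0 and φ'(t*) > 0. Then the solution extends to all of [t*, ∞), a+ and φ are bounded on [t*, ∞), φ(t) converges to a strictly positive limit as t → ∞, a+(t) → 0 as t → ∞ (indeed 0 < a+(t) ≤ a+(t*)·exp(−2φ(t*)(t − t*)) for all t ≥ t*), and the function t·a+(t)·φ(t) is bounded on [t*, ∞). -/

import Mathlib

open Set Filter MeasureTheory

/-- The hypotheses on the functions `λ, μ, v0, v3` encoding the Stenzel Calabi–Yau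
structure on `T*S³`: they are C¹ on `(0,∞)`, satisfy `λ > 0`, `μ > 0`, `v3 − v0 > 0`,
`v3 + v0 > 0`, `v0 < 0`, `μ² = v3² − v0²`, and the hypo-evolution equations
`μ' = 2λ`, `(μλ)' = 3v3`, `(λv3)' = 3μ`, `(λv0)' = 0`. -/
def StenzelHypo (lam mu v0 v3 : ℝ → ℝ) : Prop :=
  ContDiffOn ℝ 1 lam (Ioi 0) ∧ ContDiffOn ℝ 1 mu (Ioi 0) ∧
  ContDiffOn ℝ 1 v0 (Ioi 0) ∧ ContDiffOn ℝ 1 v3 (Ioi 0) ∧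
  (∀ t ∈ Ioi (0 : ℝ), 0 < lam t ∧ 0 < mu t ∧ 0 < v3 t - v0 t ∧ 0 < v3 t + v0 t ∧
    v0 t < 0 ∧ mu t ^ 2 = v3 t ^ 2 - v0 t ^ 2) ∧
  (∀ t ∈ Ioi (0 : ℝ),
    HasDerivAt mu (2 * lam t) t ∧
    HasDerivAt (fun s => mu s * lam s) (3 * v3 t) t ∧
    HasDerivAt (fun s => lam s * v3 s) (3 * mu t) t ∧
    HasDerivAt (fun s => lam s * v0 s) 0 t)

/-- A solution of the reduced Stenzel monopole system:
`a₊' = −a₊·(3(v3 + v0)/(2λμ) + 2φ)`, `φ' = −(3/μ²)((a₊²/2)(v3 − v0) + v0)`. -/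
def IsSolReducedStenzel (lam mu v0 v3 ap phi : ℝ → ℝ) (s : Set ℝ) : Prop :=
  ∀ t ∈ s,
    HasDerivAt ap (-(ap t) * (3 * (v3 t + v0 t) / (2 * lam t * mu t) + 2 * phi t)) t ∧
    HasDerivAt phi (-(3 / mu t ^ 2) * (ap t ^ 2 / 2 * (v3 t - v0 t) + v0 t)) t

namespace StenzelAux

open Topology

noncomputable section

/-- RHS of the first equation. -/
def f1 (lam mu v0 v3 : ℝ → ℝ) (t x y : ℝ) : ℝ :=
  -x * (3 * (v3 t + v0 t) / (2 * lam t * mu t) + 2 * y)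

/-- RHS of the second equation. -/
def f2 (mu v0 v3 : ℝ → ℝ) (t x y : ℝ) : ℝ :=
  -(3 / mu t ^ 2) * (x ^ 2 / 2 * (v3 t - v0 t) + v0 t)

/-- Solution with one-sided derivatives on a set. -/
def SolOn (lam mu v0 v3 a p : ℝ → ℝ) (I : Set ℝ) : Prop :=
  ∀ t ∈ I, HasDerivWithinAt a (f1 lam mu v0 v3 t (a t) (p t)) I t ∧
    HasDerivWithinAt p (f2 mu v0 v3 t (a t) (p t)) I t

variable {lam mu v0 v3 : ℝ → ℝ}

theorem SolOn.mono {a p : ℝ → ℝ} {I J : Set ℝ} (h : SolOn lam mu v0 v3 a p I) (hJ : J ⊆ I) :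
    SolOn lam mu v0 v3 a p J := fun t ht =>
  ⟨((h t (hJ ht)).1.mono hJ), ((h t (hJ ht)).2.mono hJ)⟩

theorem hasDerivWithinAt_singleton (f : ℝ → ℝ) (d x : ℝ) : HasDerivWithinAt f d {x} x := by
  rw [hasDerivWithinAt_iff_tendsto_slope]
  simp [tendsto_bot]

theorem icc_mem_nhdsWithin_Iic' {tstar s t : ℝ} (hts : tstar < t) (hs : t ≤ s) :
    Icc tstar s ∈ 𝓝[Iic t] t :=
  mem_nhdsWithin.mpr ⟨Ioi tstar, isOpen_Ioi, hts,
    fun x hx => ⟨le_of_lt hx.1, le_trans hx.2 hs⟩⟩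

theorem icc_mem_nhdsWithin_Ici' {tstar s t : ℝ} (hts : tstar ≤ t) (hs : t < s) :
    Icc tstar s ∈ 𝓝[Ici t] t :=
  mem_nhdsWithin.mpr ⟨Iio s, isOpen_Iio, hs,
    fun x hx => ⟨le_trans hts hx.2, le_of_lt hx.1⟩⟩

theorem algebra_key {A P L M U V l' : ℝ} (hL : L ≠ 0) (hM : M ≠ 0) (hUV : U - V ≠ 0)
    (hmu : M ^ 2 = U ^ 2 - V ^ 2) (h0 : A ^ 2 / 2 * (U - V) + V = 0) :
    (2 * A ^ 1 * (-A * (3 * (U + V) / (2 * L * M) + 2 * P))) / 2 * (U - V)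
      + A ^ 2 / 2 * ((3 * M - l' * U) / L - (-(l' * V) / L)) + (-(l' * V) / L)
      = 4 * V * P := by
  have hA2 : A ^ 2 * (U - V) = -2 * V := by linarith
  field_simp
  linear_combination (-(4*L*M*P) - M*l') * hA2 + 3*A^2 * hmu

/-- A solution of a scalar linear ODE that is positive initially stays positive. -/
theorem pos_of_linearODE {a : ℝ → ℝ} {tstar s : ℝ} {G : ℝ → ℝ} (hts : tstar ≤ s)
    (hG : ContinuousOn G (Icc tstar s))
    (ha : ContinuousOn a (Icc tstar s))
    (hd : ∀ t ∈ Icc tstar s, HasDerivWithinAt a (-(G t) * a t) (Icc tstar s) t)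
    (h0 : 0 < a tstar) : ∀ t ∈ Icc tstar s, 0 < a t := by
  have hnz : ∀ τ ∈ Icc tstar s, a τ ≠ 0 := by
    rintro τ hτ hz
    set c : ℝ → ℝ := fun u => min (max u tstar) τ with hc
    have hcm : ∀ u, c u ∈ Icc tstar τ := fun u =>
      ⟨le_min (le_max_right _ _) hτ.1, min_le_right _ _⟩
    have hsub : Icc tstar τ ⊆ Icc tstar s := Icc_subset_Icc le_rfl hτ.2
    have hGc : ContinuousOn G (Icc tstar τ) := hG.mono hsub
    obtain ⟨B, hB⟩ := (isCompact_Icc).exists_bound_of_continuousOn hGc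
    have hB0 : 0 ≤ B := le_trans (norm_nonneg _) (hB tstar ⟨le_rfl, hτ.1⟩)
    set v : ℝ → ℝ → ℝ := fun u x => -(G (c u)) * x with hv
    have hlip : ∀ u : ℝ, LipschitzOnWith B.toNNReal (v u) univ := by
      intro u
      rw [lipschitzOnWith_iff_dist_le_mul]
      intro x _ y _
      have h1 : |G (c u)| ≤ B := hB _ (hcm u)
      have heq : dist (v u x) (v u y) = |G (c u)| * dist x y := by
        simp only [hv, Real.dist_eq]
        rw [show -G (c u) * x - -G (c u) * y = G (c u) * (y - x) by ring, abs_mul,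
          abs_sub_comm y x]
      rw [heq, Real.coe_toNNReal B hB0]
      exact mul_le_mul_of_nonneg_right h1 dist_nonneg
    have huniq := ODE_solution_unique_of_mem_Icc_left (K := B.toNNReal)
      (v := v) (s := fun _ => (univ : Set ℝ)) (f := a) (g := fun _ => (0:ℝ))
      (a := tstar) (b := τ) (fun u _ => hlip u)
      (ha.mono hsub)
      (fun u hu => by
        have hu' : u ∈ Icc tstar s := ⟨le_of_lt hu.1, le_trans hu.2 hτ.2⟩
        have hder := (hd u hu').mono_of_mem_nhdsWithin
          (icc_mem_nhdsWithin_Iic' hu.1 (le_trans hu.2 hτ.2))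
        have hcu : c u = u := by
          have h1 : max u tstar = u := max_eq_left (le_of_lt hu.1)
          simp [hc, h1, min_eq_left hu.2]
        simpa [hv, hcu] using hder)
      (fun u _ => trivial)
      (continuousOn_const)
      (fun u _ => by simpa [hv] using (hasDerivWithinAt_const u (Iic u) (0:ℝ)))
      (fun u _ => trivial)
      (by simpa using hz)
    have := huniq ⟨le_rfl, hτ.1⟩
    simp only at this
    rw [this] at h0; exact lt_irrefl 0 h0
  intro t ht
  rcases lt_trichotomy (a t) 0 with hlt | heq | hgt
  · exfalso
    have hsub : Icc tstar t ⊆ Icc tstar s := Icc_subset_Icc le_rfl ht.2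
    have h0' : (0:ℝ) ∈ Icc (a t) (a tstar) := ⟨le_of_lt hlt, le_of_lt h0⟩
    obtain ⟨u, hu, hu0⟩ := intermediate_value_Icc' ht.1 (ha.mono hsub) h0'
    exact absurd hu0 (hnz u (hsub hu))
  · exact absurd heq (hnz t ht)
  · exact hgt


theorem glue_step {u w d1 d2 : ℝ → ℝ} {tstar sn s' : ℝ} (h1 : tstar ≤ sn) (h2 : sn ≤ s')
    (hu : ∀ t ∈ Icc tstar sn, HasDerivWithinAt u (d1 t) (Icc tstar sn) t)
    (hw : ∀ t ∈ Icc sn s', HasDerivWithinAt w (d2 t) (Icc sn s') t)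
    (hmatch : u sn = w sn) (hdmatch : d1 sn = d2 sn) :
    ∀ t ∈ Icc tstar s', HasDerivWithinAt (fun z => if z ≤ sn then u z else w z)
      (if t ≤ sn then d1 t else d2 t) (Icc tstar s') t := by
  intro t ht
  rcases lt_trichotomy t sn with hlt | heq | hgt
  · rw [if_pos hlt.le]
    have hmem : Icc tstar sn ∈ 𝓝[Icc tstar s'] t :=
      mem_nhdsWithin.mpr ⟨Iio sn, isOpen_Iio, hlt, fun z hz => ⟨hz.2.1, hz.1.le⟩⟩
    refine ((hu t ⟨ht.1, hlt.le⟩).mono_of_mem_nhdsWithin hmem).congr_of_eventuallyEq ?_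
      (if_pos hlt.le)
    filter_upwards [hmem] with z hz
    exact if_pos hz.2
  · subst heq
    rw [if_pos le_rfl]
    have hl : HasDerivWithinAt (fun z => if z ≤ t then u z else w z) (d1 t) (Icc tstar t) t :=
      (hu t ⟨h1, le_rfl⟩).congr (fun z hz => if_pos hz.2) (if_pos le_rfl)
    have hr : HasDerivWithinAt (fun z => if z ≤ t then u z else w z) (d1 t) (Icc t s') t := by
      rw [hdmatch]
      refine (hw t ⟨le_rfl, h2⟩).congr ?_ ?_
      · intro z hz
        rcases eq_or_lt_of_le hz.1 with hz1 | hz1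
        · rw [← hz1, if_pos le_rfl, hmatch]
        · exact if_neg (not_le.mpr hz1)
      · rw [if_pos le_rfl, hmatch]
    have := hl.union hr
    rwa [Icc_union_Icc_eq_Icc h1 h2] at this
  · rw [if_neg (not_le.mpr hgt)]
    have hmem : Icc sn s' ∈ 𝓝[Icc tstar s'] t :=
      mem_nhdsWithin.mpr ⟨Ioi sn, isOpen_Ioi, hgt, fun z hz => ⟨hz.1.le, hz.2.2⟩⟩
    refine ((hw t ⟨hgt.le, ht.2⟩).mono_of_mem_nhdsWithin hmem).congr_of_eventuallyEq ?_
      (if_neg (not_le.mpr hgt))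
    have hIoi : Ioi sn ∈ 𝓝[Icc tstar s'] t := mem_nhdsWithin_of_mem_nhds (Ioi_mem_nhds hgt)
    filter_upwards [hIoi] with z hz
    exact if_neg (not_le.mpr hz)

section Basic

variable (hh : StenzelHypo lam mu v0 v3)
include hh

theorem lam_pos {t : ℝ} (ht : t ∈ Ioi (0:ℝ)) : 0 < lam t := (hh.2.2.2.2.1 t ht).1
theorem mu_pos {t : ℝ} (ht : t ∈ Ioi (0:ℝ)) : 0 < mu t := (hh.2.2.2.2.1 t ht).2.1
theorem sub_pos' {t : ℝ} (ht : t ∈ Ioi (0:ℝ)) : 0 < v3 t - v0 t := (hh.2.2.2.2.1 t ht).2.2.1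
theorem add_pos' {t : ℝ} (ht : t ∈ Ioi (0:ℝ)) : 0 < v3 t + v0 t := (hh.2.2.2.2.1 t ht).2.2.2.1
theorem v0_neg {t : ℝ} (ht : t ∈ Ioi (0:ℝ)) : v0 t < 0 := (hh.2.2.2.2.1 t ht).2.2.2.2.1
theorem mu_sq {t : ℝ} (ht : t ∈ Ioi (0:ℝ)) : mu t ^ 2 = v3 t ^ 2 - v0 t ^ 2 :=
  (hh.2.2.2.2.1 t ht).2.2.2.2.2

theorem lam_contOn : ContinuousOn lam (Ioi 0) := hh.1.continuousOn
theorem mu_contOn : ContinuousOn mu (Ioi 0) := hh.2.1.continuousOn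
theorem v0_contOn : ContinuousOn v0 (Ioi 0) := hh.2.2.1.continuousOn
theorem v3_contOn : ContinuousOn v3 (Ioi 0) := hh.2.2.2.1.continuousOn

/-- Derivative formulas for `lam`, `v0`, `v3` coming from the hypo-evolution equations. -/
theorem deriv_pack {t : ℝ} (ht : t ∈ Ioi (0:ℝ)) :
    ∃ l' : ℝ, HasDerivAt lam l' t ∧
      HasDerivAt v0 (-(l' * v0 t) / lam t) t ∧
      HasDerivAt v3 ((3 * mu t - l' * v3 t) / lam t) t := by
  have hlt := lam_pos hh ht
  have hne : lam t ≠ 0 := ne_of_gt hlt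
  have hdl : DifferentiableAt ℝ lam t :=
    (hh.1.differentiableOn (by norm_num)).differentiableAt (isOpen_Ioi.mem_nhds ht)
  have hdv0 : DifferentiableAt ℝ v0 t :=
    (hh.2.2.1.differentiableOn (by norm_num)).differentiableAt (isOpen_Ioi.mem_nhds ht)
  have hdv3 : DifferentiableAt ℝ v3 t :=
    (hh.2.2.2.1.differentiableOn (by norm_num)).differentiableAt (isOpen_Ioi.mem_nhds ht)
  refine ⟨deriv lam t, hdl.hasDerivAt, ?_, ?_⟩
  · have h0 : HasDerivAt (fun s => lam s * v0 s)
        (deriv lam t * v0 t + lam t * deriv v0 t) t :=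
      hdl.hasDerivAt.mul hdv0.hasDerivAt
    have h1 := (hh.2.2.2.2.2 t ht).2.2.2
    have heq := h0.unique h1
    have hres : deriv v0 t = -(deriv lam t * v0 t) / lam t := by
      field_simp
      linarith
    rw [← hres]; exact hdv0.hasDerivAt
  · have h0 : HasDerivAt (fun s => lam s * v3 s)
        (deriv lam t * v3 t + lam t * deriv v3 t) t :=
      hdl.hasDerivAt.mul hdv3.hasDerivAt
    have h1 := (hh.2.2.2.2.2 t ht).2.2.1
    have heq := h0.unique h1
    have hres : deriv v3 t = (3 * mu t - deriv lam t * v3 t) / lam t := by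
      field_simp
      linarith
    rw [← hres]; exact hdv3.hasDerivAt

/-- The key invariance: `h := a²/2·(v3−v0) + v0` stays negative. -/
theorem h_neg_invariant {tstar s : ℝ} (hts : 0 < tstar)
    (hs : tstar ≤ s) {a p : ℝ → ℝ} (hsol : SolOn lam mu v0 v3 a p (Icc tstar s))
    (ha0 : 0 < a tstar) (hp0 : 0 < p tstar)
    (hneg : a tstar ^ 2 / 2 * (v3 tstar - v0 tstar) + v0 tstar < 0) :
    ∀ t ∈ Icc tstar s, a t ^ 2 / 2 * (v3 t - v0 t) + v0 t < 0 := by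
  set I := Icc tstar s with hIdef
  have hIsub : I ⊆ Ioi (0:ℝ) := fun x hx => lt_of_lt_of_le hts hx.1
  have hconta : ContinuousOn a I := fun t ht => (hsol t ht).1.continuousWithinAt
  have hcontp : ContinuousOn p I := fun t ht => (hsol t ht).2.continuousWithinAt
  have hcl : ContinuousOn lam I := (lam_contOn hh).mono hIsub
  have hcm : ContinuousOn mu I := (mu_contOn hh).mono hIsub
  have hc0 : ContinuousOn v0 I := (v0_contOn hh).mono hIsub
  have hc3 : ContinuousOn v3 I := (v3_contOn hh).mono hIsub
  -- a is positive on I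
  have hapos : ∀ t ∈ I, 0 < a t := by
    refine pos_of_linearODE (G := fun u => 3 * (v3 u + v0 u) / (2 * lam u * mu u) + 2 * p u)
      hs ?_ hconta ?_ ha0
    · refine ContinuousOn.add (ContinuousOn.div (continuousOn_const.mul (hc3.add hc0))
        ((continuousOn_const.mul hcl).mul hcm) ?_) (continuousOn_const.mul hcontp)
      intro t ht
      have h1 := lam_pos hh (hIsub ht); have h2 := mu_pos hh (hIsub ht)
      positivity
    · intro t ht
      have hder := (hsol t ht).1
      convert hder using 1
      simp only [f1]; ring
  set h : ℝ → ℝ := fun t => a t ^ 2 / 2 * (v3 t - v0 t) + v0 t with hhdef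
  have hconth : ContinuousOn h I := (((hconta.pow 2).div_const 2).mul (hc3.sub hc0)).add hc0
  by_contra hcon
  push_neg at hcon
  obtain ⟨τ₀, hτ₀I, hτ₀⟩ := hcon
  set S : Set ℝ := I ∩ h ⁻¹' (Ici 0) with hSdef
  have hSclosed : IsClosed S := hconth.preimage_isClosed_of_isClosed isClosed_Icc isClosed_Ici
  have hSne : S.Nonempty := ⟨τ₀, hτ₀I, by simpa using hτ₀⟩
  have hSbdd : BddBelow S := ⟨tstar, fun x hx => hx.1.1⟩
  set τ := sInf S with hτdef
  have hτS : τ ∈ S := hSclosed.csInf_mem hSne hSbdd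
  have hτI : τ ∈ I := hτS.1
  have hτ' : τ ∈ Ioi (0:ℝ) := hIsub hτI
  have hτh : 0 ≤ h τ := hτS.2
  have htsτ : tstar < τ := by
    rcases lt_or_eq_of_le hτI.1 with h1 | h1
    · exact h1
    · exfalso; rw [← h1] at hτh; exact absurd hτh (not_le.mpr hneg)
  have hIco : ∀ t ∈ Ico tstar τ, h t < 0 := by
    intro t ht
    by_contra hc; push_neg at hc
    have htI : t ∈ I := ⟨ht.1, le_trans ht.2.le hτI.2⟩
    have : τ ≤ t := csInf_le hSbdd ⟨htI, hc⟩
    exact absurd ht.2 (not_lt.mpr this)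
  have hτ0 : h τ = 0 := by
    refine le_antisymm ?_ hτh
    have hne : (𝓝[Ico tstar τ] τ).NeBot := by
      rw [nhdsWithin_Ico_eq_nhdsLT htsτ]; infer_instance
    have hct : ContinuousWithinAt h (Ico tstar τ) τ :=
      (hconth.continuousWithinAt hτI).mono (fun x hx => ⟨hx.1, le_trans hx.2.le hτI.2⟩)
    exact le_of_tendsto hct (eventually_mem_nhdsWithin.mono fun t ht => (hIco t ht).le)
  -- p is increasing up to τ, hence positive at τ
  have hmono : StrictMonoOn p (Icc tstar τ) := by
    refine strictMonoOn_of_deriv_pos (convex_Icc _ _)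
      (hcontp.mono (Icc_subset_Icc le_rfl hτI.2)) ?_
    intro x hx
    rw [interior_Icc] at hx
    have hxI : x ∈ I := ⟨hx.1.le, le_trans hx.2.le hτI.2⟩
    have hxd : HasDerivAt p (f2 mu v0 v3 x (a x) (p x)) x :=
      (hsol x hxI).2.hasDerivAt (Icc_mem_nhds (lt_of_lt_of_le hx.1 le_rfl)
        (lt_of_lt_of_le hx.2 hτI.2))
    rw [hxd.deriv]
    have hx0 : h x < 0 := hIco x ⟨hx.1.le, hx.2⟩
    have hm := mu_pos hh (hIsub hxI)
    have h32 : (0:ℝ) < 3 / mu x ^ 2 := by positivity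
    have : -(3 / mu x ^ 2) < 0 := by linarith
    exact mul_pos_of_neg_of_neg this hx0
  have hpτ : 0 < p τ :=
    lt_trans hp0 (hmono ⟨le_rfl, htsτ.le⟩ ⟨htsτ.le, le_rfl⟩ htsτ)
  have haτ : 0 < a τ := hapos τ hτI
  -- derivative of h at τ from the left
  obtain ⟨l', hl, hd0, hd3⟩ := deriv_pack hh hτ'
  have hA : HasDerivWithinAt a (f1 lam mu v0 v3 τ (a τ) (p τ)) (Iic τ) τ :=
    (hsol τ hτI).1.mono_of_mem_nhdsWithin (icc_mem_nhdsWithin_Iic' htsτ hτI.2)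
  have hLne : lam τ ≠ 0 := ne_of_gt (lam_pos hh hτ')
  have hMne : mu τ ≠ 0 := ne_of_gt (mu_pos hh hτ')
  have hUVne : v3 τ - v0 τ ≠ 0 := ne_of_gt (sub_pos' hh hτ')
  have hkey := algebra_key (A := a τ) (P := p τ) (L := lam τ) (M := mu τ)
    (U := v3 τ) (V := v0 τ) (l' := l') hLne hMne hUVne (mu_sq hh hτ') hτ0
  have hH : HasDerivWithinAt h (4 * v0 τ * p τ) (Iic τ) τ := by
    have hder : HasDerivWithinAt (fun t => a t ^ 2 / 2 * (v3 t - v0 t) + v0 t) _ (Iic τ) τ :=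
      (((hA.pow 2).div_const 2).mul ((hd3.sub hd0).hasDerivWithinAt)).add
      hd0.hasDerivWithinAt
    convert hder using 1
    simp only [f1, Pi.sub_apply, Pi.pow_apply] at hkey ⊢
    push_cast
    linear_combination -hkey
  have hdneg : 4 * v0 τ * p τ < 0 := by
    have := v0_neg hh hτ'
    nlinarith
  -- contradiction via the left slope
  have hslope := hasDerivWithinAt_iff_tendsto_slope.mp hH
  have hev : ∀ᶠ u in 𝓝[Iic τ \ {τ}] τ, slope h τ u < 0 :=
    hslope.eventually_lt_const hdneg
  have hmono2 : 𝓝[Ico tstar τ] τ ≤ 𝓝[Iic τ \ {τ}] τ :=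
    nhdsWithin_mono τ (fun x hx => ⟨hx.2.le, ne_of_lt hx.2⟩)
  have hne : (𝓝[Ico tstar τ] τ).NeBot := by
    rw [nhdsWithin_Ico_eq_nhdsLT htsτ]; infer_instance
  obtain ⟨u, hus, huIco⟩ := ((hev.filter_mono hmono2).and eventually_mem_nhdsWithin).exists
  have hpos : 0 < slope h τ u := by
    rw [slope_def_field, hτ0]
    have h1 : h u < 0 := hIco u huIco
    have h2 : 0 < τ - u := sub_pos.mpr huIco.2
    exact div_pos_iff.mpr (Or.inr ⟨by linarith, by linarith⟩)
  linarith


/-- Quantitative consequences of the invariant region. -/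
theorem sol_bounds {tstar s : ℝ} (hts : 0 < tstar) (hs : tstar ≤ s) {a p : ℝ → ℝ}
    (hsol : SolOn lam mu v0 v3 a p (Icc tstar s))
    (ha0 : 0 < a tstar) (hp0 : 0 < p tstar)
    (hneg : a tstar ^ 2 / 2 * (v3 tstar - v0 tstar) + v0 tstar < 0)
    (hint : IntegrableOn (fun t => -3 * v0 t / mu t ^ 2) (Ici tstar)) :
    (∀ t ∈ Icc tstar s, 0 < a t) ∧
    MonotoneOn p (Icc tstar s) ∧
    (∀ t ∈ Icc tstar s, a t ≤ a tstar * Real.exp (-(2 * p tstar * (t - tstar)))) ∧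
    (∀ t ∈ Icc tstar s, p t ≤ p tstar + ∫ u in Ici tstar, -3 * v0 u / mu u ^ 2) := by
  set I := Icc tstar s with hIdef
  have hIsub : I ⊆ Ioi (0:ℝ) := fun x hx => lt_of_lt_of_le hts hx.1
  have hconta : ContinuousOn a I := fun t ht => (hsol t ht).1.continuousWithinAt
  have hcontp : ContinuousOn p I := fun t ht => (hsol t ht).2.continuousWithinAt
  have hcl : ContinuousOn lam I := (lam_contOn hh).mono hIsub
  have hcm : ContinuousOn mu I := (mu_contOn hh).mono hIsub
  have hc0 : ContinuousOn v0 I := (v0_contOn hh).mono hIsub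
  have hc3 : ContinuousOn v3 I := (v3_contOn hh).mono hIsub
  have hinv := h_neg_invariant hh hts hs hsol ha0 hp0 hneg
  have hapos : ∀ t ∈ I, 0 < a t := by
    refine pos_of_linearODE (G := fun u => 3 * (v3 u + v0 u) / (2 * lam u * mu u) + 2 * p u)
      hs ?_ hconta ?_ ha0
    · refine ContinuousOn.add (ContinuousOn.div (continuousOn_const.mul (hc3.add hc0))
        ((continuousOn_const.mul hcl).mul hcm) ?_) (continuousOn_const.mul hcontp)
      intro t ht
      have h1 := lam_pos hh (hIsub ht); have h2 := mu_pos hh (hIsub ht)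
      positivity
    · intro t ht
      have hder := (hsol t ht).1
      convert hder using 1
      simp only [f1]; ring
  -- interior full derivatives
  have hderp : ∀ x ∈ Ioo tstar s, HasDerivAt p (f2 mu v0 v3 x (a x) (p x)) x := by
    intro x hx
    exact (hsol x ⟨hx.1.le, hx.2.le⟩).2.hasDerivAt (Icc_mem_nhds hx.1 hx.2)
  have hdera : ∀ x ∈ Ioo tstar s, HasDerivAt a (f1 lam mu v0 v3 x (a x) (p x)) x := by
    intro x hx
    exact (hsol x ⟨hx.1.le, hx.2.le⟩).1.hasDerivAt (Icc_mem_nhds hx.1 hx.2)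
  -- monotonicity of p
  have hpmono : MonotoneOn p I := by
    refine monotoneOn_of_deriv_nonneg (convex_Icc _ _) hcontp ?_ ?_
    · rw [interior_Icc]
      exact fun x hx => ((hderp x hx).differentiableAt).differentiableWithinAt
    · rw [interior_Icc]
      intro x hx
      rw [(hderp x hx).deriv]
      have hx0 : a x ^ 2 / 2 * (v3 x - v0 x) + v0 x < 0 := hinv x ⟨hx.1.le, hx.2.le⟩
      have hm := mu_pos hh (hIsub ⟨hx.1.le, hx.2.le⟩)
      have h32 : (0:ℝ) < 3 / mu x ^ 2 := by positivity
      simp only [f2]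
      nlinarith
  refine ⟨hapos, hpmono, ?_, ?_⟩
  · -- exponential decay bound for a
    set q : ℝ → ℝ := fun t => a t * Real.exp (2 * p tstar * (t - tstar)) with hqdef
    have hE : ∀ x : ℝ, HasDerivAt (fun t => Real.exp (2 * p tstar * (t - tstar)))
        (Real.exp (2 * p tstar * (x - tstar)) * (2 * p tstar)) x := by
      intro x
      have h1 : HasDerivAt (fun t : ℝ => 2 * p tstar * (t - tstar)) (2 * p tstar) x := by
        simpa using ((hasDerivAt_id x).sub_const tstar).const_mul (2 * p tstar)
      exact h1.exp
    have hqd : ∀ x ∈ Ioo tstar s, HasDerivAt q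
        (f1 lam mu v0 v3 x (a x) (p x) * Real.exp (2 * p tstar * (x - tstar))
          + a x * (Real.exp (2 * p tstar * (x - tstar)) * (2 * p tstar))) x :=
      fun x hx => (hdera x hx).mul (hE x)
    have hqanti : AntitoneOn q I := by
      refine antitoneOn_of_deriv_nonpos (convex_Icc _ _)
        ((hconta.mul (Real.continuous_exp.comp (by continuity)).continuousOn)) ?_ ?_
      · rw [interior_Icc]
        exact fun x hx => ((hqd x hx).differentiableAt).differentiableWithinAt
      · rw [interior_Icc]
        intro x hx
        rw [(hqd x hx).deriv]
        have hxI : x ∈ I := ⟨hx.1.le, hx.2.le⟩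
        have hax := hapos x hxI
        have hg : 0 < 3 * (v3 x + v0 x) / (2 * lam x * mu x) := by
          have h1 := lam_pos hh (hIsub hxI); have h2 := mu_pos hh (hIsub hxI)
          have h3 := add_pos' hh (hIsub hxI)
          positivity
        have hpx : p tstar ≤ p x := hpmono ⟨le_rfl, hs⟩ hxI hx.1.le
        have hEx : 0 < Real.exp (2 * p tstar * (x - tstar)) := Real.exp_pos _
        simp only [f1]
        nlinarith [mul_nonneg (mul_nonneg hax.le hEx.le)
          (by linarith : (0:ℝ) ≤ 3 * (v3 x + v0 x) / (2 * lam x * mu x) + 2 * p x - 2 * p tstar)]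
    intro t ht
    have hq : q t ≤ q tstar := hqanti ⟨le_rfl, hs⟩ ht ht.1
    have hq0 : q tstar = a tstar := by simp [hqdef]
    rw [hq0] at hq
    have hEx : 0 < Real.exp (2 * p tstar * (t - tstar)) := Real.exp_pos _
    rw [Real.exp_neg]
    have h2 : a t ≤ a tstar / Real.exp (2 * p tstar * (t - tstar)) :=
      (le_div_iff₀ hEx).mpr hq
    rwa [div_eq_mul_inv] at h2
  · -- upper bound for p
    intro t ht
    set w : ℝ → ℝ := fun u => -3 * v0 u / mu u ^ 2 with hwdef
    have hsubt : Icc tstar t ⊆ I := Icc_subset_Icc le_rfl ht.2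
    have hcf2 : ContinuousOn (fun u => f2 mu v0 v3 u (a u) (p u)) (Icc tstar t) := by
      refine ((continuousOn_const.div ((hcm.mono hsubt).pow 2) ?_).neg.mul
        ((((hconta.mono hsubt).pow 2).div_const 2).mul
          ((hc3.mono hsubt).sub (hc0.mono hsubt)) |>.add (hc0.mono hsubt)))
      intro x hx
      show mu x ^ 2 ≠ 0
      have := mu_pos hh (hIsub (hsubt hx)); positivity
    have hcw : ContinuousOn w (Icc tstar t) := by
      refine (continuousOn_const.mul (hc0.mono hsubt)).div ((hcm.mono hsubt).pow 2) ?_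
      intro x hx
      have := mu_pos hh (hIsub (hsubt hx)); positivity
    have hif2 : IntervalIntegrable (fun u => f2 mu v0 v3 u (a u) (p u)) volume tstar t := by
      apply ContinuousOn.intervalIntegrable
      rwa [uIcc_of_le ht.1]
    have hiw : IntervalIntegrable w volume tstar t := by
      apply ContinuousOn.intervalIntegrable
      rwa [uIcc_of_le ht.1]
    have hFTC : ∫ u in tstar..t, f2 mu v0 v3 u (a u) (p u) = p t - p tstar := by
      refine intervalIntegral.integral_eq_sub_of_hasDeriv_right_of_le ht.1
        (hcontp.mono hsubt) ?_ hif2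
      intro x hx
      exact ((hderp x ⟨hx.1, lt_of_lt_of_le hx.2 ht.2⟩)).hasDerivWithinAt
    have hmono1 : ∫ u in tstar..t, f2 mu v0 v3 u (a u) (p u) ≤ ∫ u in tstar..t, w u := by
      refine intervalIntegral.integral_mono_on ht.1 hif2 hiw ?_
      intro x hx
      have hxI : x ∈ I := hsubt hx
      have hm := mu_pos hh (hIsub hxI)
      have hsp := sub_pos' hh (hIsub hxI)
      have e1 : f2 mu v0 v3 x (a x) (p x)
          = (-3 * (a x ^ 2 / 2 * (v3 x - v0 x) + v0 x)) / mu x ^ 2 := by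
        simp only [f2]; ring
      rw [e1, hwdef]
      apply div_le_div_of_nonneg_right ?_ (by positivity)
      nlinarith [sq_nonneg (a x)]
    have hmono2 : ∫ u in tstar..t, w u ≤ ∫ u in Ici tstar, w u := by
      rw [intervalIntegral.integral_of_le ht.1]
      refine setIntegral_mono_set hint ?_ ?_
      · refine (ae_restrict_iff' measurableSet_Ici).mpr (ae_of_all _ ?_)
        intro x hx
        have hx0 : (0:ℝ) < x := lt_of_lt_of_le hts hx
        have hv0 := v0_neg hh hx0
        have hm := mu_pos hh hx0
        rw [hwdef]
        apply div_nonneg (by nlinarith) (by positivity)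
      · exact HasSubset.Subset.eventuallyLE (fun x hx => le_of_lt hx.1)
    linarith [hFTC, hmono1, hmono2]


/-- Coefficient bound on a compact subinterval of `(0,∞)`. -/
theorem coeff_bound {t1 t2 : ℝ} (ht1 : 0 < t1) :
    ∃ B : ℝ, 0 ≤ B ∧ ∀ t ∈ Icc t1 t2,
      3 * (v3 t + v0 t) / (2 * lam t * mu t) ≤ B ∧
      3 * (v3 t - v0 t) / (2 * mu t ^ 2) ≤ B ∧
      -3 * v0 t / mu t ^ 2 ≤ B := by
  have hIsub : Icc t1 t2 ⊆ Ioi (0:ℝ) := fun x hx => lt_of_lt_of_le ht1 hx.1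
  have hcl : ContinuousOn lam (Icc t1 t2) := (lam_contOn hh).mono hIsub
  have hcm : ContinuousOn mu (Icc t1 t2) := (mu_contOn hh).mono hIsub
  have hc0 : ContinuousOn v0 (Icc t1 t2) := (v0_contOn hh).mono hIsub
  have hc3 : ContinuousOn v3 (Icc t1 t2) := (v3_contOn hh).mono hIsub
  have hmne : ∀ x ∈ Icc t1 t2, (2 * lam x * mu x) ≠ 0 := by
    intro x hx
    have := lam_pos hh (hIsub hx); have := mu_pos hh (hIsub hx); positivity
  have hm2ne : ∀ x ∈ Icc t1 t2, (2 * mu x ^ 2) ≠ 0 := by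
    intro x hx; have := mu_pos hh (hIsub hx); positivity
  have hm3ne : ∀ x ∈ Icc t1 t2, (mu x ^ 2) ≠ 0 := by
    intro x hx; have := mu_pos hh (hIsub hx); positivity
  obtain ⟨B1, hB1⟩ := isCompact_Icc.exists_bound_of_continuousOn
    ((continuousOn_const.mul (hc3.add hc0)).div ((continuousOn_const.mul hcl).mul hcm) hmne)
  obtain ⟨B2, hB2⟩ := isCompact_Icc.exists_bound_of_continuousOn
    ((continuousOn_const.mul (hc3.sub hc0)).div (continuousOn_const.mul (hcm.pow 2)) hm2ne)
  obtain ⟨B3, hB3⟩ := isCompact_Icc.exists_bound_of_continuousOn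
    ((continuousOn_const.mul hc0).div (hcm.pow 2) hm3ne)
  refine ⟨max 0 (max B1 (max B2 B3)), le_max_left _ _, ?_⟩
  intro t ht
  have h1 := hB1 t ht; have h2 := hB2 t ht; have h3 := hB3 t ht
  rw [Real.norm_eq_abs] at h1 h2 h3
  refine ⟨?_, ?_, ?_⟩
  · calc 3 * (v3 t + v0 t) / (2 * lam t * mu t) ≤ B1 := le_trans (le_abs_self _) h1
      _ ≤ _ := by
        apply le_max_of_le_right; exact le_max_left _ _
  · calc 3 * (v3 t - v0 t) / (2 * mu t ^ 2) ≤ B2 := le_trans (le_abs_self _) h2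
      _ ≤ _ := by
        apply le_max_of_le_right; apply le_max_of_le_right; exact le_max_left _ _
  · calc -3 * v0 t / mu t ^ 2 ≤ B3 := le_trans (le_abs_self _) h3
      _ ≤ _ := by
        apply le_max_of_le_right; apply le_max_of_le_right; exact le_max_right _ _

/-- Lipschitz bound for the pair vector field on a ball. -/
theorem lips_pair {t ρ B : ℝ} (ht : t ∈ Ioi (0:ℝ)) (hρ : 0 ≤ ρ) (hB0 : 0 ≤ B)
    (hg : 3 * (v3 t + v0 t) / (2 * lam t * mu t) ≤ B)
    (hc1 : 3 * (v3 t - v0 t) / (2 * mu t ^ 2) ≤ B) :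
    LipschitzOnWith (Real.toNNReal (B + 4 * ρ + 2 * B * ρ))
      (fun x : ℝ × ℝ => (f1 lam mu v0 v3 t x.1 x.2, f2 mu v0 v3 t x.1 x.2))
      (Metric.closedBall 0 ρ) := by
  have hgpos : 0 < 3 * (v3 t + v0 t) / (2 * lam t * mu t) := by
    have := lam_pos hh ht; have := mu_pos hh ht; have := add_pos' hh ht; positivity
  have hc1pos : 0 < 3 * (v3 t - v0 t) / (2 * mu t ^ 2) := by
    have := mu_pos hh ht; have := sub_pos' hh ht; positivity
  rw [lipschitzOnWith_iff_dist_le_mul]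
  intro x hx y hy
  rw [Real.coe_toNNReal _ (by nlinarith : (0:ℝ) ≤ B + 4 * ρ + 2 * B * ρ)]
  set G := 3 * (v3 t + v0 t) / (2 * lam t * mu t) with hGdef
  set C := 3 * (v3 t - v0 t) / (2 * mu t ^ 2) with hCdef
  have hx1 : |x.1| ≤ ρ := by
    have := norm_fst_le x
    rw [mem_closedBall_zero_iff] at hx
    calc |x.1| = ‖x.1‖ := rfl
      _ ≤ ‖x‖ := norm_fst_le x
      _ ≤ ρ := hx
  have hy2 : |y.2| ≤ ρ := by
    rw [mem_closedBall_zero_iff] at hy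
    calc |y.2| = ‖y.2‖ := rfl
      _ ≤ ‖y‖ := norm_snd_le y
      _ ≤ ρ := hy
  have hy1 : |y.1| ≤ ρ := by
    rw [mem_closedBall_zero_iff] at hy
    calc |y.1| = ‖y.1‖ := rfl
      _ ≤ ‖y‖ := norm_fst_le y
      _ ≤ ρ := hy
  have hd1 : dist x.1 y.1 ≤ dist x y := by rw [Prod.dist_eq]; exact le_max_left _ _
  have hd2 : dist x.2 y.2 ≤ dist x y := by rw [Prod.dist_eq]; exact le_max_right _ _
  rw [Real.dist_eq] at hd1 hd2
  have hdnn : 0 ≤ dist x y := dist_nonneg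
  rw [Prod.dist_eq]
  apply max_le
  · rw [Real.dist_eq]
    have e : f1 lam mu v0 v3 t x.1 x.2 - f1 lam mu v0 v3 t y.1 y.2
        = -(G * (x.1 - y.1)) + (-(2 * (x.1 * (x.2 - y.2))) + -(2 * (y.2 * (x.1 - y.1)))) := by
      simp only [f1, hGdef]; ring
    rw [e]
    calc |(-(G * (x.1 - y.1))) + (-(2 * (x.1 * (x.2 - y.2))) + -(2 * (y.2 * (x.1 - y.1))))|
        ≤ |(-(G * (x.1 - y.1)))| + (|(-(2 * (x.1 * (x.2 - y.2))))| + |(-(2 * (y.2 * (x.1 - y.1))))|) :=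
          le_trans (abs_add_le _ _) (by gcongr; exact abs_add_le _ _)
      _ = G * |x.1 - y.1| + (2 * (|x.1| * |x.2 - y.2|) + 2 * (|y.2| * |x.1 - y.1|)) := by
          rw [abs_neg, abs_neg, abs_neg, abs_mul, abs_mul, abs_mul, abs_mul, abs_mul]
          rw [abs_of_pos hgpos, abs_of_nonneg (by norm_num : (0:ℝ) ≤ (2:ℝ))]
      _ ≤ (B + 4 * ρ + 2 * B * ρ) * dist x y := by
          nlinarith [mul_le_mul hg hd1 (abs_nonneg _) hB0,
            mul_le_mul hx1 hd2 (abs_nonneg _) hρ, mul_le_mul hy2 hd1 (abs_nonneg _) hρ,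
            mul_nonneg (mul_nonneg hB0 hρ) hdnn]
  · rw [Real.dist_eq]
    have e : f2 mu v0 v3 t x.1 x.2 - f2 mu v0 v3 t y.1 y.2
        = -(C * ((x.1 + y.1) * (x.1 - y.1))) := by
      simp only [f2, hCdef]
      field_simp
      ring
    rw [e, abs_neg, abs_mul, abs_mul, abs_of_pos hc1pos]
    calc C * (|x.1 + y.1| * |x.1 - y.1|) ≤ B * ((2 * ρ) * dist x y) := by
          apply mul_le_mul hc1 ?_ (by positivity) hB0
          apply mul_le_mul ?_ hd1 (abs_nonneg _) (by positivity)
          calc |x.1 + y.1| ≤ |x.1| + |y.1| := abs_add_le _ _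
            _ ≤ 2 * ρ := by linarith
      _ ≤ (B + 4 * ρ + 2 * B * ρ) * dist x y := by nlinarith


/-- A priori bound: solutions with good initial data stay in the ball of radius `ρ`. -/
theorem apriori_bound {tstar s' : ℝ} (hts : 0 < tstar) (hs' : tstar ≤ s') {a p : ℝ → ℝ}
    (hsol : SolOn lam mu v0 v3 a p (Icc tstar s'))
    (ha0 : 0 < a tstar) (hp0 : 0 < p tstar)
    (hneg : a tstar ^ 2 / 2 * (v3 tstar - v0 tstar) + v0 tstar < 0)
    (hint : IntegrableOn (fun t => -3 * v0 t / mu t ^ 2) (Ici tstar)) :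
    ∀ t ∈ Icc tstar s', ‖((a t, p t) : ℝ × ℝ)‖
      ≤ max (a tstar) (p tstar + ∫ u in Ici tstar, -3 * v0 u / mu u ^ 2) := by
  obtain ⟨hapos, hpmono, haexp, hpbd⟩ := sol_bounds hh hts hs' hsol ha0 hp0 hneg hint
  intro t ht
  have h1 : 0 < a t := hapos t ht
  have h2 : a t ≤ a tstar := by
    have := haexp t ht
    have hexp : Real.exp (-(2 * p tstar * (t - tstar))) ≤ 1 := by
      rw [Real.exp_le_one_iff]
      nlinarith [ht.1, hp0]
    nlinarith
  have h3 : p tstar ≤ p t := hpmono ⟨le_rfl, hs'⟩ ht ht.1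
  have h4 := hpbd t ht
  rw [Prod.norm_def]
  apply max_le
  · rw [Real.norm_eq_abs, abs_of_pos h1]
    exact le_max_of_le_left h2
  · rw [Real.norm_eq_abs, abs_of_pos (lt_of_lt_of_le hp0 h3)]
    exact le_max_of_le_right h4

set_option maxHeartbeats 2000000 in
/-- Global existence of a solution on `[tstar, S]` with prescribed initial data. -/
theorem exists_sol {tstar S : ℝ} (hts : 0 < tstar) (hS : tstar ≤ S)
    (hint : IntegrableOn (fun t => -3 * v0 t / mu t ^ 2) (Ici tstar))
    {a0 p0 : ℝ} (ha0 : 0 < a0) (hp0 : 0 < p0)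
    (hneg : a0 ^ 2 / 2 * (v3 tstar - v0 tstar) + v0 tstar < 0) :
    ∃ a p : ℝ → ℝ, a tstar = a0 ∧ p tstar = p0 ∧ SolOn lam mu v0 v3 a p (Icc tstar S) := by
  classical
  set Cinf : ℝ := ∫ u in Ici tstar, -3 * v0 u / mu u ^ 2 with hCinfdef
  clear_value Cinf
  have hCinf0 : 0 ≤ Cinf := by
    rw [hCinfdef]
    refine setIntegral_nonneg measurableSet_Ici ?_
    intro x hx
    have hx0 : (0:ℝ) < x := lt_of_lt_of_le hts hx
    have := v0_neg hh hx0
    have := mu_pos hh hx0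
    apply div_nonneg (by nlinarith) (by positivity)
  set ρ : ℝ := max a0 (p0 + Cinf) with hρdef
  clear_value ρ
  have hρ0 : 0 ≤ ρ := by
    rw [hρdef]; exact le_trans ha0.le (le_max_left _ _)
  set ρ' : ℝ := ρ + 1 with hρ'def
  clear_value ρ'
  have hρ'0 : 0 ≤ ρ' := by rw [hρ'def]; linarith
  obtain ⟨B, hB0, hB⟩ := coeff_bound hh (t1 := tstar) (t2 := S) hts
  set K : NNReal := Real.toNNReal (B + 4 * ρ' + 2 * B * ρ') with hKdef
  clear_value K
  set C : ℝ := B * ρ' + 2 * ρ' ^ 2 + B * ρ' ^ 2 + B + 1 with hCdef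
  clear_value C
  have hC0 : 0 < C := by
    have h1 := mul_nonneg hB0 hρ'0
    have h2 := mul_nonneg hB0 (sq_nonneg ρ')
    have h3 := sq_nonneg ρ'
    rw [hCdef]
    linarith only [h1, h2, h3, hB0]
  set ε : ℝ := 1 / C with hεdef
  clear_value ε
  have hε0 : 0 < ε := by rw [hεdef]; positivity
  -- the continuity of the field in t, for fixed x
  have hFcont : ∀ (x : ℝ × ℝ) (t1 t2 : ℝ), tstar ≤ t1 →
      ContinuousOn (fun u => ((f1 lam mu v0 v3 u x.1 x.2, f2 mu v0 v3 u x.1 x.2) : ℝ × ℝ))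
        (Icc t1 t2) := by
    intro x t1 t2 ht1
    have hIsub : Icc t1 t2 ⊆ Ioi (0:ℝ) := fun z hz =>
      lt_of_lt_of_le hts (le_trans ht1 hz.1)
    have hcl : ContinuousOn lam (Icc t1 t2) := (lam_contOn hh).mono hIsub
    have hcm : ContinuousOn mu (Icc t1 t2) := (mu_contOn hh).mono hIsub
    have hc0 : ContinuousOn v0 (Icc t1 t2) := (v0_contOn hh).mono hIsub
    have hc3 : ContinuousOn v3 (Icc t1 t2) := (v3_contOn hh).mono hIsub
    apply ContinuousOn.prodMk
    · simp only [f1]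
      refine continuousOn_const.mul (ContinuousOn.add (ContinuousOn.div
        (continuousOn_const.mul (hc3.add hc0)) ((continuousOn_const.mul hcl).mul hcm) ?_)
        continuousOn_const)
      intro z hz
      have := lam_pos hh (hIsub hz); have := mu_pos hh (hIsub hz); positivity
    · simp only [f2]
      refine ContinuousOn.mul (ContinuousOn.neg (ContinuousOn.div continuousOn_const
        (hcm.pow 2) ?_)) ((continuousOn_const.mul (hc3.sub hc0)).add hc0)
      intro z hz
      have := mu_pos hh (hIsub hz); positivity
  -- main induction
  have main : ∀ n : ℕ, ∃ a p : ℝ → ℝ, a tstar = a0 ∧ p tstar = p0 ∧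
      SolOn lam mu v0 v3 a p (Icc tstar (min (tstar + n * ε) S)) := by
    intro n
    induction n with
    | zero =>
      refine ⟨fun _ => a0, fun _ => p0, rfl, rfl, ?_⟩
      have hmin : min (tstar + (0:ℕ) * ε) S = tstar := by
        simp [min_eq_left hS]
      rw [hmin, Icc_self]
      intro t ht
      rw [mem_singleton_iff] at ht
      subst ht
      exact ⟨hasDerivWithinAt_singleton _ _ _, hasDerivWithinAt_singleton _ _ _⟩
    | succ n ih =>
      obtain ⟨a, p, ha, hp, hsol⟩ := ih
      set sn : ℝ := min (tstar + n * ε) S with hsndef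
      have hsn1 : tstar ≤ sn := le_min (le_add_of_nonneg_right (by positivity)) hS
      have hsn2 : sn ≤ S := min_le_right _ _
      by_cases hcase : S ≤ tstar + n * ε
      · have h1 : sn = S := min_eq_right hcase
        have h2 : min (tstar + (n + 1 : ℕ) * ε) S = S := by
          refine min_eq_right (le_trans hcase ?_)
          push_cast
          nlinarith
        rw [h2]
        rw [h1] at hsol
        exact ⟨a, p, ha, hp, hsol⟩
      · push_neg at hcase
        have hsnval : sn = tstar + n * ε := min_eq_left hcase.le
        have hsnS : sn < S := by rw [hsnval]; exact hcase
        set s' : ℝ := min (sn + ε) S with hs'def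
        have hs'1 : sn ≤ s' := le_min (by linarith) hsnS.le
        have hs'S : s' ≤ S := min_le_right _ _
        have hsucc : min (tstar + (n + 1 : ℕ) * ε) S = s' := by
          rw [hs'def, hsnval]
          congr 1
          push_cast
          ring
        rw [hsucc]
        -- a priori bound at sn
        have hsol0 : a tstar = a0 := ha
        have hbnd := apriori_bound hh hts hsn1 hsol (by rw [ha]; exact ha0)
          (by rw [hp]; exact hp0) (by rw [ha]; exact hneg) hint
        have hx₁ : ‖((a sn, p sn) : ℝ × ℝ)‖ ≤ ρ := by
          have := hbnd sn ⟨hsn1, le_rfl⟩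
          rw [ha, hp] at this
          rw [hρdef, hCinfdef]
          exact this
        set x₁ : ℝ × ℝ := (a sn, p sn) with hx₁def
        set F : ℝ → ℝ × ℝ → ℝ × ℝ :=
          fun u x => (f1 lam mu v0 v3 u x.1 x.2, f2 mu v0 v3 u x.1 x.2) with hFdef
        have hball : Metric.closedBall x₁ 1 ⊆ Metric.closedBall (0 : ℝ × ℝ) ρ' := by
          apply Metric.closedBall_subset_closedBall'
          rw [dist_zero_right]
          rw [hρ'def]; linarith
        have hCc : ((C.toNNReal : NNReal) : ℝ) = C := Real.coe_toNNReal _ hC0.le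
        have hpl : IsPicardLindelof F (tmin := sn) (tmax := s') ⟨sn, le_rfl, hs'1⟩ x₁ 1 0
            C.toNNReal K := by
          constructor
          · intro u hu
            have hu' : u ∈ Icc tstar S := ⟨le_trans hsn1 hu.1, le_trans hu.2 hs'S⟩
            have hu0 : u ∈ Ioi (0:ℝ) := lt_of_lt_of_le hts hu'.1
            obtain ⟨hg, hc1, _⟩ := hB u hu'
            rw [hKdef]
            exact (lips_pair hh hu0 hρ'0 hB0 hg hc1).mono hball
          · intro x _
            exact hFcont x sn s' hsn1
          · intro u hu x hxmem
            rw [hCc]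
            have hu' : u ∈ Icc tstar S := ⟨le_trans hsn1 hu.1, le_trans hu.2 hs'S⟩
            have hu0 : u ∈ Ioi (0:ℝ) := lt_of_lt_of_le hts hu'.1
            obtain ⟨hg, hc1, hc2⟩ := hB u hu'
            have hgpos : 0 < 3 * (v3 u + v0 u) / (2 * lam u * mu u) := by
              have := lam_pos hh hu0; have := mu_pos hh hu0; have := add_pos' hh hu0
              positivity
            have hc1pos : 0 < 3 * (v3 u - v0 u) / (2 * mu u ^ 2) := by
              have := mu_pos hh hu0; have := sub_pos' hh hu0; positivity
            have hc2pos : 0 < -3 * v0 u / mu u ^ 2 := by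
              have h1 := mu_pos hh hu0; have h2 := v0_neg hh hu0
              apply div_pos (by nlinarith) (by positivity)
            have hxball : x ∈ Metric.closedBall (0 : ℝ × ℝ) ρ' := hball hxmem
            rw [mem_closedBall_zero_iff] at hxball
            have hx1 : |x.1| ≤ ρ' := le_trans (norm_fst_le x) hxball
            have hx2 : |x.2| ≤ ρ' := le_trans (norm_snd_le x) hxball
            simp only [hFdef]
            rw [Prod.norm_def]
            apply max_le
            · rw [Real.norm_eq_abs]
              have e : f1 lam mu v0 v3 u x.1 x.2
                  = -(x.1 * (3 * (v3 u + v0 u) / (2 * lam u * mu u)) + 2 * (x.1 * x.2)) := by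
                simp only [f1]; ring
              rw [e, abs_neg]
              have e3 : |x.1 * (3 * (v3 u + v0 u) / (2 * lam u * mu u))|
                  = |x.1| * (3 * (v3 u + v0 u) / (2 * lam u * mu u)) := by
                rw [abs_mul, abs_of_pos hgpos]
              have e4 : |2 * (x.1 * x.2)| = 2 * (|x.1| * |x.2|) := by
                rw [abs_mul, abs_mul, abs_of_nonneg (by norm_num : (0:ℝ) ≤ (2:ℝ))]
              calc |x.1 * (3 * (v3 u + v0 u) / (2 * lam u * mu u)) + 2 * (x.1 * x.2)|
                  ≤ |x.1| * (3 * (v3 u + v0 u) / (2 * lam u * mu u)) + 2 * (|x.1| * |x.2|) := by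
                    refine le_trans (abs_add_le _ _) ?_
                    rw [e3, e4]
                _ ≤ C := by
                    rw [hCdef]
                    have h5 := mul_le_mul hx1 hg hgpos.le hρ'0
                    have h6 := mul_le_mul hx1 hx2 (abs_nonneg _) hρ'0
                    have h7 := mul_nonneg hB0 (sq_nonneg ρ')
                    linarith only [h5, h6, h7, hB0, sq_nonneg ρ']
            · rw [Real.norm_eq_abs]
              have e : f2 mu v0 v3 u x.1 x.2
                  = -(3 * (v3 u - v0 u) / (2 * mu u ^ 2) * x.1 ^ 2) + -3 * v0 u / mu u ^ 2 := by
                simp only [f2]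
                have hm := mu_pos hh hu0
                field_simp
                ring
              rw [e]
              calc |(-(3 * (v3 u - v0 u) / (2 * mu u ^ 2) * x.1 ^ 2)) + -3 * v0 u / mu u ^ 2|
                  ≤ 3 * (v3 u - v0 u) / (2 * mu u ^ 2) * x.1 ^ 2 + -3 * v0 u / mu u ^ 2 := by
                    refine le_trans (abs_add_le _ _) (le_of_eq ?_)
                    rw [abs_neg, abs_mul, abs_of_pos hc1pos,
                      abs_of_nonneg (sq_nonneg x.1), abs_of_pos hc2pos]
                _ ≤ C := by
                    rw [hCdef]
                    have hx1sq : x.1 ^ 2 ≤ ρ' ^ 2 := by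
                      rw [← sq_abs]
                      exact pow_le_pow_left₀ (abs_nonneg _) hx1 2
                    have h5 := mul_le_mul hc1 hx1sq (sq_nonneg _) hB0
                    have h6 := mul_nonneg hB0 hρ'0
                    linarith only [h5, h6, hc2, sq_nonneg ρ']
          · simp only [hCc, NNReal.coe_one, NNReal.coe_zero, sub_zero]
            have h1 : max (s' - sn) (sn - sn) = s' - sn := by
              rw [max_eq_left]
              linarith
            rw [h1]
            have h2 : s' - sn ≤ ε := by
              have := min_le_left (sn + ε) S
              rw [← hs'def] at this
              linarith
            calc C * (s' - sn) ≤ C * ε := by gcongr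
              _ = 1 := by rw [hεdef]; field_simp
        obtain ⟨f, hfs, hfd⟩ := hpl.exists_eq_forall_mem_Icc_hasDerivWithinAt₀
        replace hfs : f sn = x₁ := hfs
        -- component derivatives of f
        have hfd1 : ∀ u ∈ Icc sn s', HasDerivWithinAt (fun z => (f z).1)
            (f1 lam mu v0 v3 u (f u).1 (f u).2) (Icc sn s') u := by
          intro u hu
          have h : HasDerivWithinAt (fun z => (f z).1) _ (Icc sn s') u :=
            (ContinuousLinearMap.hasFDerivAt
            (ContinuousLinearMap.fst ℝ ℝ ℝ) (x := f u)).comp_hasDerivWithinAt u (hfd u hu)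
          simpa [hFdef] using h
        have hfd2 : ∀ u ∈ Icc sn s', HasDerivWithinAt (fun z => (f z).2)
            (f2 mu v0 v3 u (f u).1 (f u).2) (Icc sn s') u := by
          intro u hu
          have h : HasDerivWithinAt (fun z => (f z).2) _ (Icc sn s') u :=
            (ContinuousLinearMap.hasFDerivAt
            (ContinuousLinearMap.snd ℝ ℝ ℝ) (x := f u)).comp_hasDerivWithinAt u (hfd u hu)
          simpa [hFdef] using h
        -- glue
        refine ⟨fun z => if z ≤ sn then a z else (f z).1,
          fun z => if z ≤ sn then p z else (f z).2, ?_, ?_, ?_⟩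
        · show (if tstar ≤ sn then a tstar else (f tstar).1) = a0
          rw [if_pos hsn1]; exact ha
        · show (if tstar ≤ sn then p tstar else (f tstar).2) = p0
          rw [if_pos hsn1]; exact hp
        · intro t ht
          have hfsn1 : (f sn).1 = a sn := by rw [hfs]
          have hfsn2 : (f sn).2 = p sn := by rw [hfs]
          have hga := glue_step hsn1 hs'1 (fun z hz => (hsol z hz).1) hfd1
            hfsn1.symm (by rw [hfsn1, hfsn2]) t ht
          have hgp := glue_step hsn1 hs'1 (fun z hz => (hsol z hz).2) hfd2
            hfsn2.symm (by rw [hfsn1, hfsn2]) t ht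
          constructor
          · show HasDerivWithinAt (fun z => if z ≤ sn then a z else (f z).1)
              (f1 lam mu v0 v3 t (if t ≤ sn then a t else (f t).1)
                (if t ≤ sn then p t else (f t).2)) (Icc tstar s') t
            by_cases htn : t ≤ sn
            · rw [if_pos htn] at hga
              rw [if_pos htn, if_pos htn]
              exact hga
            · rw [if_neg htn] at hga
              rw [if_neg htn, if_neg htn]
              exact hga
          · show HasDerivWithinAt (fun z => if z ≤ sn then p z else (f z).2)
              (f2 mu v0 v3 t (if t ≤ sn then a t else (f t).1)
                (if t ≤ sn then p t else (f t).2)) (Icc tstar s') t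
            by_cases htn : t ≤ sn
            · rw [if_pos htn] at hgp
              rw [if_pos htn, if_pos htn]
              exact hgp
            · rw [if_neg htn] at hgp
              rw [if_neg htn, if_neg htn]
              exact hgp
  -- conclude: pick n large
  obtain ⟨n, hn⟩ := exists_nat_ge ((S - tstar) / ε)
  obtain ⟨a, p, ha, hp, hsol⟩ := main n
  have hmin : min (tstar + n * ε) S = S := by
    apply min_eq_right
    rw [div_le_iff₀ hε0] at hn
    linarith
  rw [hmin] at hsol
  exact ⟨a, p, ha, hp, hsol⟩


set_option maxHeartbeats 1000000 in
/-- Uniqueness of solutions with given (good) initial data. -/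
theorem uniq_sol {tstar s : ℝ} (hts : 0 < tstar) (hs : tstar ≤ s)
    (hint : IntegrableOn (fun t => -3 * v0 t / mu t ^ 2) (Ici tstar))
    {a p b q : ℝ → ℝ}
    (hsol1 : SolOn lam mu v0 v3 a p (Icc tstar s))
    (hsol2 : SolOn lam mu v0 v3 b q (Icc tstar s))
    (ha0 : 0 < a tstar) (hp0 : 0 < p tstar)
    (hneg : a tstar ^ 2 / 2 * (v3 tstar - v0 tstar) + v0 tstar < 0)
    (heqa : b tstar = a tstar) (heqq : q tstar = p tstar) :
    ∀ t ∈ Icc tstar s, b t = a t ∧ q t = p t := by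
  classical
  set ρ : ℝ := max (a tstar) (p tstar + ∫ u in Ici tstar, -3 * v0 u / mu u ^ 2) with hρdef
  have hρ0 : 0 ≤ ρ := by
    rw [hρdef]; exact le_trans ha0.le (le_max_left _ _)
  obtain ⟨B, hB0, hB⟩ := coeff_bound hh (t1 := tstar) (t2 := s) hts
  set c : ℝ → ℝ := fun u => min (max u tstar) s with hcdef
  have hcm : ∀ u, c u ∈ Icc tstar s := fun u =>
    ⟨le_min (le_max_right _ _) hs, min_le_right _ _⟩
  have hcid : ∀ u ∈ Icc tstar s, c u = u := by
    intro u hu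
    rw [hcdef]
    simp only
    rw [max_eq_left hu.1, min_eq_left hu.2]
  set v : ℝ → ℝ × ℝ → ℝ × ℝ := fun u x =>
    (f1 lam mu v0 v3 (c u) x.1 x.2, f2 mu v0 v3 (c u) x.1 x.2) with hvdef
  have hv : ∀ u : ℝ, LipschitzOnWith (Real.toNNReal (B + 4 * ρ + 2 * B * ρ)) (v u)
      (Metric.closedBall 0 ρ) := by
    intro u
    have h0 : c u ∈ Ioi (0:ℝ) := lt_of_lt_of_le hts (hcm u).1
    obtain ⟨hg, hc1, _⟩ := hB (c u) (hcm u)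
    exact lips_pair hh h0 hρ0 hB0 hg hc1
  have hbnd1 := apriori_bound hh hts hs hsol1 ha0 hp0 hneg hint
  have hbnd2 := apriori_bound hh hts hs hsol2 (by rw [heqa]; exact ha0)
    (by rw [heqq]; exact hp0) (by rw [heqa]; exact hneg) hint
  have hfg : EqOn (fun t => ((a t, p t) : ℝ × ℝ)) (fun t => ((b t, q t) : ℝ × ℝ))
      (Icc tstar s) := by
    refine ODE_solution_unique_of_mem_Icc_right (fun u _ => hv u) ?_ ?_ ?_ ?_ ?_ ?_ ?_
    · exact ContinuousOn.prodMk (fun t ht => (hsol1 t ht).1.continuousWithinAt)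
        (fun t ht => (hsol1 t ht).2.continuousWithinAt)
    · intro t ht
      have hmem : Icc tstar s ∈ 𝓝[Ici t] t := icc_mem_nhdsWithin_Ici' ht.1 ht.2
      have hd := ((hsol1 t ⟨ht.1, ht.2.le⟩).1.mono_of_mem_nhdsWithin hmem).prodMk
        ((hsol1 t ⟨ht.1, ht.2.le⟩).2.mono_of_mem_nhdsWithin hmem)
      refine hd.congr_deriv ?_
      rw [hvdef]
      simp only
      rw [hcid t ⟨ht.1, ht.2.le⟩]
    · intro t ht
      rw [mem_closedBall_zero_iff]
      rw [hρdef]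
      exact hbnd1 t ⟨ht.1, ht.2.le⟩
    · exact ContinuousOn.prodMk (fun t ht => (hsol2 t ht).1.continuousWithinAt)
        (fun t ht => (hsol2 t ht).2.continuousWithinAt)
    · intro t ht
      have hmem : Icc tstar s ∈ 𝓝[Ici t] t := icc_mem_nhdsWithin_Ici' ht.1 ht.2
      have hd := ((hsol2 t ⟨ht.1, ht.2.le⟩).1.mono_of_mem_nhdsWithin hmem).prodMk
        ((hsol2 t ⟨ht.1, ht.2.le⟩).2.mono_of_mem_nhdsWithin hmem)
      refine hd.congr_deriv ?_
      rw [hvdef]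
      simp only
      rw [hcid t ⟨ht.1, ht.2.le⟩]
    · intro t ht
      rw [mem_closedBall_zero_iff]
      have := hbnd2 t ⟨ht.1, ht.2.le⟩
      rw [heqa, heqq] at this
      rw [hρdef]
      exact this
    · show ((a tstar, p tstar) : ℝ × ℝ) = (b tstar, q tstar)
      rw [heqa, heqq]
  intro t ht
  have := hfg ht
  simp only [Prod.mk.injEq] at this
  exact ⟨this.1.symm, this.2.symm⟩

end Basic

end

end StenzelAux

open StenzelAux Topology in
set_option maxHeartbeats 2000000 in
/-- Assume additionally that `∫_{t*}^∞ (−3v0/μ²) < ∞`.  A solution of the reduced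
Stenzel monopole system with `a₊(t*) > 0`, `φ(t*) > 0` and `φ'(t*) > 0` extends to all of
`[t*, ∞)`, the extension has `a₊` and `φ` bounded, `φ` converging to a strictly positive
limit, `0 < a₊(t) ≤ a₊(t*)·exp(−2φ(t*)(t − t*))` (so `a₊ → 0`), and `t·a₊(t)·φ(t)`
bounded on `[t*, ∞)`. -/
theorem reduced_stenzel_convergence (lam mu v0 v3 ap phi : ℝ → ℝ)
    (hhypo : StenzelHypo lam mu v0 v3)
    (tstar T : ℝ) (hts : 0 < tstar) (htT : tstar ≤ T)
    (hint : IntegrableOn (fun t => -3 * v0 t / mu t ^ 2) (Ici tstar))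
    (hsol : IsSolReducedStenzel lam mu v0 v3 ap phi (Icc tstar T))
    (hp : 0 < ap tstar) (hphi : 0 < phi tstar) (hphi' : 0 < deriv phi tstar) :
    ∃ bp psi : ℝ → ℝ,
      IsSolReducedStenzel lam mu v0 v3 bp psi (Ici tstar) ∧
      (∀ t ∈ Icc tstar T, bp t = ap t ∧ psi t = phi t) ∧
      (∃ M : ℝ, ∀ t ∈ Ici tstar, |bp t| ≤ M ∧ |psi t| ≤ M) ∧
      (∃ L : ℝ, 0 < L ∧ Tendsto psi atTop (nhds L)) ∧
      (∀ t ∈ Ici tstar, 0 < bp t ∧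
        bp t ≤ ap tstar * Real.exp (-2 * phi tstar * (t - tstar))) ∧
      Tendsto bp atTop (nhds 0) ∧
      (∃ M : ℝ, ∀ t ∈ Ici tstar, |t * bp t * psi t| ≤ M) := by
  classical
  have hh := hhypo
  have htstar : tstar ∈ Ioi (0:ℝ) := hts
  -- initial condition for h
  have hneg : ap tstar ^ 2 / 2 * (v3 tstar - v0 tstar) + v0 tstar < 0 := by
    have hD := (hsol tstar ⟨le_rfl, htT⟩).2
    have hD' : deriv phi tstar
        = -(3 / mu tstar ^ 2) * (ap tstar ^ 2 / 2 * (v3 tstar - v0 tstar) + v0 tstar) :=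
      hD.deriv
    have hm := mu_pos hh htstar
    have hX : (0:ℝ) < 3 / mu tstar ^ 2 := by positivity
    by_contra hcon
    push_neg at hcon
    have : -(3 / mu tstar ^ 2) * (ap tstar ^ 2 / 2 * (v3 tstar - v0 tstar) + v0 tstar) ≤ 0 := by
      nlinarith
    rw [hD'] at hphi'
    linarith
  -- the given solution as a SolOn
  have hsolOn : SolOn lam mu v0 v3 ap phi (Icc tstar T) := fun t ht =>
    ⟨(hsol t ht).1.hasDerivWithinAt, (hsol t ht).2.hasDerivWithinAt⟩
  -- solutions on all [tstar, tstar+n]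
  have hex : ∀ n : ℕ, ∃ a p : ℝ → ℝ, a tstar = ap tstar ∧ p tstar = phi tstar ∧
      SolOn lam mu v0 v3 a p (Icc tstar (tstar + n)) := fun n =>
    exists_sol hh hts (le_add_of_nonneg_right (Nat.cast_nonneg n)) hint hp hphi hneg
  choose A P hA hP hsolA using hex
  -- coherence between the chosen solutions
  have hag : ∀ n : ℕ, ∀ t ∈ Icc tstar (tstar + (n:ℝ)), ∀ m : ℕ,
      t ∈ Icc tstar (tstar + (m:ℝ)) → A m t = A n t ∧ P m t = P n t := by
    intro n t ht m htm
    have hsub1 : Icc tstar t ⊆ Icc tstar (tstar + (n:ℝ)) := Icc_subset_Icc le_rfl ht.2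
    have hsub2 : Icc tstar t ⊆ Icc tstar (tstar + (m:ℝ)) := Icc_subset_Icc le_rfl htm.2
    refine uniq_sol hh hts ht.1 hint ((hsolA n).mono hsub1) ((hsolA m).mono hsub2)
      (by rw [hA n]; exact hp) (by rw [hP n]; exact hphi)
      (by rw [hA n]; exact hneg) (by rw [hA m, hA n]) (by rw [hP m, hP n]) t ⟨ht.1, le_rfl⟩
  -- the global solution
  set bp : ℝ → ℝ := fun t => if t < tstar then ap t else A (⌊t - tstar⌋₊ + 1) t with hbpdef
  set psi : ℝ → ℝ := fun t => if t < tstar then phi t else P (⌊t - tstar⌋₊ + 1) t with hpsidef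
  have hidx : ∀ t : ℝ, t < tstar + ((⌊t - tstar⌋₊ + 1 : ℕ) : ℝ) := by
    intro t
    have := Nat.lt_floor_add_one (t - tstar)
    push_cast
    linarith
  have hcoh : ∀ n : ℕ, ∀ t ∈ Icc tstar (tstar + (n:ℝ)), bp t = A n t ∧ psi t = P n t := by
    intro n t ht
    have h1 : ¬ t < tstar := not_lt.mpr ht.1
    have h2 : t ∈ Icc tstar (tstar + ((⌊t - tstar⌋₊ + 1 : ℕ) : ℝ)) := ⟨ht.1, (hidx t).le⟩
    have h3 := hag n t ht (⌊t - tstar⌋₊ + 1) h2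
    constructor
    · show (if t < tstar then ap t else A (⌊t - tstar⌋₊ + 1) t) = A n t
      rw [if_neg h1]; exact h3.1
    · show (if t < tstar then phi t else P (⌊t - tstar⌋₊ + 1) t) = P n t
      rw [if_neg h1]; exact h3.2
  have hbps : bp tstar = ap tstar := by
    have := (hcoh 0 tstar ⟨le_rfl, by simp⟩).1
    rw [this, hA 0]
  have hpsis : psi tstar = phi tstar := by
    have := (hcoh 0 tstar ⟨le_rfl, by simp⟩).2
    rw [this, hP 0]
  -- global derivatives
  have hglob : ∀ t ∈ Ici tstar,
      HasDerivAt bp (f1 lam mu v0 v3 t (bp t) (psi t)) t ∧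
      HasDerivAt psi (f2 mu v0 v3 t (bp t) (psi t)) t := by
    intro t htt
    rcases eq_or_lt_of_le (mem_Ici.mp htt) with heq | hlt
    · subst heq
      have h01 : (0:ℝ) ≤ 1 := by norm_num
      have htt1 : tstar < tstar + ((1:ℕ):ℝ) := by push_cast; linarith
      have hccm : Icc tstar (tstar + ((1:ℕ):ℝ)) ∈ 𝓝[Ici tstar] tstar :=
        icc_mem_nhdsWithin_Ici' le_rfl htt1
      have hone : tstar ∈ Icc tstar (tstar + ((1:ℕ):ℝ)) := ⟨le_rfl, htt1.le⟩
      have hbpeq : ∀ z ∈ Iic tstar, bp z = ap z := by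
        intro z hz
        rcases lt_or_eq_of_le (mem_Iic.mp hz) with h | h
        · show (if z < tstar then ap z else A (⌊z - tstar⌋₊ + 1) z) = ap z
          rw [if_pos h]
        · subst h; exact hbps
      have hpsieq : ∀ z ∈ Iic tstar, psi z = phi z := by
        intro z hz
        rcases lt_or_eq_of_le (mem_Iic.mp hz) with h | h
        · show (if z < tstar then phi z else P (⌊z - tstar⌋₊ + 1) z) = phi z
          rw [if_pos h]
        · subst h; exact hpsis
      have hevci : ∀ᶠ z in 𝓝[Ici tstar] tstar, bp z = A 1 z :=
        Filter.eventually_of_mem hccm (fun z hz => (hcoh 1 z hz).1)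
      have hevci2 : ∀ᶠ z in 𝓝[Ici tstar] tstar, psi z = P 1 z :=
        Filter.eventually_of_mem hccm (fun z hz => (hcoh 1 z hz).2)
      constructor
      · have hIic : HasDerivWithinAt bp
            (f1 lam mu v0 v3 tstar (ap tstar) (phi tstar)) (Iic tstar) tstar :=
          HasDerivWithinAt.congr ((hsol tstar ⟨le_rfl, htT⟩).1.hasDerivWithinAt) hbpeq hbps
        have hIci : HasDerivWithinAt bp
            (f1 lam mu v0 v3 tstar (ap tstar) (phi tstar)) (Ici tstar) tstar := by
          have hbase := ((hsolA 1 tstar hone).1).mono_of_mem_nhdsWithin hccm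
          rw [hA 1, hP 1] at hbase
          exact hbase.congr_of_eventuallyEq
            (hevci.mono fun z hz => hz) (by rw [hbps, hA 1])
        have := hIic.union hIci
        rw [Iic_union_Ici] at this
        have hfin := this.hasDerivAt (by simp)
        rw [← hbps, ← hpsis] at hfin
        exact hfin
      · have hIic : HasDerivWithinAt psi
            (f2 mu v0 v3 tstar (ap tstar) (phi tstar)) (Iic tstar) tstar :=
          HasDerivWithinAt.congr ((hsol tstar ⟨le_rfl, htT⟩).2.hasDerivWithinAt) hpsieq hpsis
        have hIci : HasDerivWithinAt psi
            (f2 mu v0 v3 tstar (ap tstar) (phi tstar)) (Ici tstar) tstar := by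
          have hbase := ((hsolA 1 tstar hone).2).mono_of_mem_nhdsWithin hccm
          rw [hA 1, hP 1] at hbase
          exact hbase.congr_of_eventuallyEq
            (hevci2.mono fun z hz => hz) (by rw [hpsis, hP 1])
        have := hIic.union hIci
        rw [Iic_union_Ici] at this
        have hfin := this.hasDerivAt (by simp)
        rw [← hbps, ← hpsis] at hfin
        exact hfin
    · set n : ℕ := ⌊t - tstar⌋₊ + 1 with hndef
      have htn : t < tstar + (n:ℝ) := hidx t
      have hmem : Icc tstar (tstar + (n:ℝ)) ∈ 𝓝 t := Icc_mem_nhds hlt htn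
      have hev : ∀ᶠ z in 𝓝 t, A n z = bp z :=
        Filter.eventually_of_mem hmem (fun z hz => ((hcoh n z hz).1).symm)
      have hev2 : ∀ᶠ z in 𝓝 t, P n z = psi z :=
        Filter.eventually_of_mem hmem (fun z hz => ((hcoh n z hz).2).symm)
      have htmem : t ∈ Icc tstar (tstar + (n:ℝ)) := ⟨htt, htn.le⟩
      have hda := ((hsolA n t htmem).1).hasDerivAt hmem
      have hdp := ((hsolA n t htmem).2).hasDerivAt hmem
      rw [← (hcoh n t htmem).1, ← (hcoh n t htmem).2] at hda hdp
      constructor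
      · exact hda.congr_of_eventuallyEq (hev.mono fun z hz => hz.symm)
      · exact hdp.congr_of_eventuallyEq (hev2.mono fun z hz => hz.symm)
  -- restriction of the global solution
  have hsolglob : ∀ s', SolOn lam mu v0 v3 bp psi (Icc tstar s') := by
    intro s' t ht
    exact ⟨((hglob t ht.1).1).hasDerivWithinAt, ((hglob t ht.1).2).hasDerivWithinAt⟩
  have hbp0 : 0 < bp tstar := by rw [hbps]; exact hp
  have hpsi0 : 0 < psi tstar := by rw [hpsis]; exact hphi
  have hnegbp : bp tstar ^ 2 / 2 * (v3 tstar - v0 tstar) + v0 tstar < 0 := by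
    rw [hbps]; exact hneg
  set Cinf : ℝ := ∫ u in Ici tstar, -3 * v0 u / mu u ^ 2 with hCinfdef
  have hCinf0 : 0 ≤ Cinf := by
    rw [hCinfdef]
    refine setIntegral_nonneg measurableSet_Ici ?_
    intro x hx
    have hx0 : (0:ℝ) < x := lt_of_lt_of_le hts hx
    have := v0_neg hh hx0
    have := mu_pos hh hx0
    apply div_nonneg (by nlinarith) (by positivity)
  -- key pointwise facts
  have hkey : ∀ t, tstar ≤ t → 0 < bp t ∧
      bp t ≤ ap tstar * Real.exp (-(2 * phi tstar * (t - tstar))) ∧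
      phi tstar ≤ psi t ∧ psi t ≤ phi tstar + Cinf := by
    intro t ht
    obtain ⟨hapos, hpmono, haexp, hpbd⟩ :=
      sol_bounds hh hts ht (hsolglob t) hbp0 hpsi0 hnegbp hint
    have htmem : t ∈ Icc tstar t := ⟨ht, le_rfl⟩
    refine ⟨hapos t htmem, ?_, ?_, ?_⟩
    · have := haexp t htmem
      rwa [hbps, hpsis] at this
    · have := hpmono ⟨le_rfl, ht⟩ htmem ht
      rwa [hpsis] at this
    · have := hpbd t htmem
      rwa [hpsis, ← hCinfdef] at this
  have hmonoIci : ∀ t, tstar ≤ t → ∀ u, t ≤ u → psi t ≤ psi u := by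
    intro t ht u htu
    obtain ⟨hapos, hpmono, haexp, hpbd⟩ :=
      sol_bounds hh hts (le_trans ht htu) (hsolglob u) hbp0 hpsi0 hnegbp hint
    exact hpmono ⟨ht, htu⟩ ⟨le_trans ht htu, le_rfl⟩ htu
  refine ⟨bp, psi, ?_, ?_, ?_, ?_, ?_, ?_, ?_⟩
  · -- solution on Ici
    intro t ht
    exact ⟨(hglob t ht).1, (hglob t ht).2⟩
  · -- agreement with (ap, phi) on [tstar, T]
    exact uniq_sol hh hts htT hint hsolOn ((hsolglob T).mono (fun z hz => hz))
      hp hphi hneg hbps hpsis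
  · -- boundedness
    refine ⟨max (ap tstar) (phi tstar + Cinf), ?_⟩
    intro t ht
    obtain ⟨h1, h2, h3, h4⟩ := hkey t ht
    constructor
    · rw [abs_of_pos h1]
      refine le_max_of_le_left ?_
      have ht' : tstar ≤ t := ht
      have hexp : Real.exp (-(2 * phi tstar * (t - tstar))) ≤ 1 := by
        rw [Real.exp_le_one_iff]
        nlinarith [mul_nonneg hphi.le (by linarith : (0:ℝ) ≤ t - tstar)]
      nlinarith
    · rw [abs_of_pos (lt_of_lt_of_le hphi h3)]
      exact le_max_of_le_right h4
  · -- convergence of psi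
    set q : ℝ → ℝ := fun t => psi (max t tstar) with hqdef
    have hqmono : Monotone q := by
      intro t u htu
      exact hmonoIci _ (le_max_right _ _) _ (max_le_max htu le_rfl)
    have hqbdd : BddAbove (range q) := by
      refine ⟨phi tstar + Cinf, ?_⟩
      rintro y ⟨t, rfl⟩
      exact (hkey _ (le_max_right _ _)).2.2.2
    have htendq : Tendsto q atTop (nhds (⨆ t, q t)) := tendsto_atTop_ciSup hqmono hqbdd
    refine ⟨⨆ t, q t, ?_, ?_⟩
    · have h1 : q tstar ≤ ⨆ t, q t := le_ciSup hqbdd tstar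
      have h2 : q tstar = phi tstar := by
        rw [hqdef]; simp only [max_self]; exact hpsis
      linarith
    · refine htendq.congr' ?_
      filter_upwards [eventually_ge_atTop tstar] with t ht
      rw [hqdef]
      simp only [max_eq_left ht]
  · -- pointwise bounds for bp
    intro t ht
    obtain ⟨h1, h2, _, _⟩ := hkey t ht
    refine ⟨h1, ?_⟩
    have he : -(2 * phi tstar * (t - tstar)) = -2 * phi tstar * (t - tstar) := by ring
    rwa [he] at h2
  · -- bp tends to 0
    have hb1 : Tendsto (fun t : ℝ => -2 * phi tstar * (t - tstar)) atTop atBot := by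
      have h1 : Tendsto (fun t : ℝ => t - tstar) atTop atTop :=
        tendsto_atTop_add_const_right _ _ tendsto_id
      exact h1.const_mul_atTop_of_neg (by linarith)
    have hb2 : Tendsto (fun t : ℝ => Real.exp (-2 * phi tstar * (t - tstar))) atTop (nhds 0) :=
      Real.tendsto_exp_atBot.comp hb1
    have hb3 : Tendsto (fun t : ℝ => ap tstar * Real.exp (-2 * phi tstar * (t - tstar)))
        atTop (nhds 0) := by
      have := hb2.const_mul (ap tstar)
      simpa using this
    refine tendsto_of_tendsto_of_tendsto_of_le_of_le' tendsto_const_nhds hb3 ?_ ?_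
    · filter_upwards [eventually_ge_atTop tstar] with t ht
      exact (hkey t ht).1.le
    · filter_upwards [eventually_ge_atTop tstar] with t ht
      have h2 := (hkey t ht).2.1
      have he : -(2 * phi tstar * (t - tstar)) = -2 * phi tstar * (t - tstar) := by ring
      rwa [he] at h2
  · -- t * bp * psi bounded
    refine ⟨ap tstar * (1 / (2 * phi tstar) + tstar) * (phi tstar + Cinf), ?_⟩
    intro t ht
    obtain ⟨h1, h2, h3, h4⟩ := hkey t ht
    have ht' : tstar ≤ t := ht
    have ht0 : 0 < t := lt_of_lt_of_le hts ht'
    have hpsit : 0 < psi t := lt_of_lt_of_le hphi h3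
    have habs : |t * bp t * psi t| = t * bp t * psi t :=
      abs_of_pos (mul_pos (mul_pos ht0 h1) hpsit)
    rw [habs]
    set c : ℝ := 2 * phi tstar with hcdef
    have hc : 0 < c := by rw [hcdef]; linarith
    set v : ℝ := t - tstar with hvdef
    have hv0 : 0 ≤ v := by rw [hvdef]; linarith
    have hE : Real.exp (-(2 * phi tstar * (t - tstar))) = Real.exp (-(c * v)) := by
      rw [hcdef, hvdef]
    have hEpos : 0 < Real.exp (c * v) := Real.exp_pos _
    have hcv := Real.add_one_le_exp (c * v)
    have h5 : v * Real.exp (-(c * v)) ≤ 1 / c := by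
      rw [Real.exp_neg]
      rw [le_div_iff₀ hc]
      have e1 : v * (Real.exp (c * v))⁻¹ * c = (c * v) / Real.exp (c * v) := by
        field_simp
      rw [e1, div_le_one hEpos]
      linarith
    have hexp1 : Real.exp (-(c * v)) ≤ 1 := by
      rw [Real.exp_le_one_iff]
      nlinarith
    have hexpnn : 0 ≤ Real.exp (-(c * v)) := (Real.exp_pos _).le
    -- t * bp t ≤ ap tstar * (1/c + tstar)
    have h6 : t * bp t ≤ ap tstar * (1 / c + tstar) := by
      have h7 : t * bp t ≤ t * (ap tstar * Real.exp (-(c * v))) := by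
        rw [← hE]
        exact mul_le_mul_of_nonneg_left h2 ht0.le
      have h8 : t * (ap tstar * Real.exp (-(c * v)))
          = ap tstar * (v * Real.exp (-(c * v)) + tstar * Real.exp (-(c * v))) := by
        rw [hvdef]; ring
      have h9 : tstar * Real.exp (-(c * v)) ≤ tstar :=
        (mul_le_of_le_one_right hts.le hexp1)
      have h10 : v * Real.exp (-(c * v)) + tstar * Real.exp (-(c * v)) ≤ 1 / c + tstar := by
        linarith
      calc t * bp t ≤ ap tstar * (v * Real.exp (-(c * v)) + tstar * Real.exp (-(c * v))) := by
            rw [← h8]; exact h7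
        _ ≤ ap tstar * (1 / c + tstar) := mul_le_mul_of_nonneg_left h10 hp.le
    have h11 : t * bp t * psi t ≤ t * bp t * (phi tstar + Cinf) :=
      mul_le_mul_of_nonneg_left h4 (mul_pos ht0 h1).le
    have h12 : 0 < phi tstar + Cinf := by linarith
    calc t * bp t * psi t ≤ t * bp t * (phi tstar + Cinf) := h11
      _ ≤ ap tstar * (1 / c + tstar) * (phi tstar + Cinf) :=
          mul_le_mul_of_nonneg_right h6 h12.le
      _ = ap tstar * (1 / (2 * phi tstar) + tstar) * (phi tstar + Cinf) := by rw [hcdef]
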